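/- arXiv:2506.00846 — 2 statements merged into one kernel-verified Lean document; each statement's English description precedes it below -/
import Mathlib

section
/- In Setup (DP), the fourth moment of X_1 is uniformly bounded in the width: there exists a constant M (depending only on r, t_1,…,t_r, B, and σ_1²,…,σ_L², but not on n) such that E[X_1⁴] ≤ M for all n. -/
open MeasureTheory ProbabilityTheory Filter Topology Real

noncomputable section

open Finset
open scoped NNReal ENNReal Nat

/-!
Conditionally on the inputs, each entry `(W^{i,j} x^{i,j})_1` is a centred Gaussian of variance
`σ² ‖x^{i,j}‖² / n ≤ B² σ²`, and `X_1 = ∑ t_i P_i Q_i` for such Gaussians `P_i, Q_i`. The power-mean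
inequality and `P⁴Q⁴ ≤ P⁸ + Q⁸` reduce `E[X_1⁴]` to eighth moments of these Gaussians, which the
moment generating function controls through `p⁸ ≤ 8! (eᵖ + e⁻ᵖ)`. Independence of the weights and
the inputs lets one integrate out the weights first, with the inputs frozen.
-/

lemma pow_eight_le_exp_add_exp (p : ℝ) : p ^ 8 ≤ 8 ! * (exp p + exp (-p)) :=
  calc p ^ 8 = |p| ^ 8 := by rw [pow_abs, abs_of_nonneg (by positivity)]
    _ ≤ 8 ! * exp |p| :=
      (div_le_iff₀' (by positivity)).1 (pow_div_factorial_le_exp |p| (abs_nonneg p) 8)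
    _ ≤ 8 ! * (exp p + exp (-p)) := by gcongr; exact exp_abs_le p

lemma sum_mul_mul_pow_four_le {ι : Type*} (s : Finset ι) (t P Q : ι → ℝ) :
    (∑ i ∈ s, t i * (P i * Q i)) ^ 4 ≤ #s ^ 3 * ∑ i ∈ s, t i ^ 4 * (P i ^ 8 + Q i ^ 8) :=
  calc (∑ i ∈ s, t i * (P i * Q i)) ^ 4 = |∑ i ∈ s, t i * (P i * Q i)| ^ 4 := by
        rw [pow_abs, abs_of_nonneg (by positivity)]
    _ ≤ (∑ i ∈ s, |t i * (P i * Q i)|) ^ 4 := by gcongr; exact abs_sum_le_sum_abs _ _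
    _ ≤ #s ^ 3 * ∑ i ∈ s, |t i * (P i * Q i)| ^ 4 :=
        pow_sum_le_card_mul_sum_pow (fun i _ => abs_nonneg _) 3
    _ ≤ #s ^ 3 * ∑ i ∈ s, t i ^ 4 * (P i ^ 8 + Q i ^ 8) := by
        gcongr with i
        rw [pow_abs, abs_of_nonneg (by positivity), mul_pow, mul_pow]
        gcongr
        have : 0 ≤ P i ^ 4 * Q i ^ 4 := by positivity
        nlinarith [sq_nonneg (P i ^ 4 - Q i ^ 4)]

theorem ProbabilityTheory.iIndepFun.mgf_sum_mul_of_map_eq_gaussianReal {ι Ω : Type*}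
    [MeasurableSpace Ω] {μ : Measure Ω} {Y : ι → Ω → ℝ} (hind : iIndepFun Y μ)
    (hmeas : ∀ j, Measurable (Y j)) {w : ι → ℝ≥0}
    (hlaw : ∀ j, μ.map (Y j) = gaussianReal 0 (w j)) (a : ι → ℝ) (s : Finset ι) (t : ℝ) :
    mgf (fun ω => ∑ j ∈ s, a j * Y j ω) μ t = exp ((∑ j ∈ s, a j ^ 2 * w j) * t ^ 2 / 2) :=
  calc mgf (fun ω => ∑ j ∈ s, a j * Y j ω) μ t = mgf (∑ j ∈ s, fun ω => a j * Y j ω) μ t := by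
        simp only [Finset.sum_fn]
    _ = ∏ j ∈ s, mgf (fun ω => a j * Y j ω) μ t :=
        (hind.comp (fun j y => a j * y) fun j => measurable_const_mul _).mgf_sum
          (fun j => (hmeas j).const_mul _) s
    _ = ∏ j ∈ s, exp (a j ^ 2 * w j * t ^ 2 / 2) := by
        refine prod_congr rfl fun j _ => ?_
        rw [mgf_const_mul, mgf_gaussianReal (hlaw j)]
        ring_nf
    _ = exp ((∑ j ∈ s, a j ^ 2 * w j) * t ^ 2 / 2) := by
        rw [← exp_sum, sum_mul, sum_div]

lemma lintegral_pow_eight_le_of_mgf_eq {Ω : Type*} [MeasurableSpace Ω] {μ : Measure Ω}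
    [IsProbabilityMeasure μ] {Y : Ω → ℝ} {v : ℝ}
    (hmgf : ∀ t, mgf Y μ t = exp (v * t ^ 2 / 2)) :
    ∫⁻ ω, ENNReal.ofReal (Y ω ^ 8) ∂μ ≤ ENNReal.ofReal (2 * 8 ! * exp (v / 2)) := by
  have hint : ∀ t, Integrable (fun ω => exp (t * Y ω)) μ := fun t =>
    mgf_pos_iff.1 (hmgf t ▸ exp_pos _)
  have hint_pos : Integrable (fun ω => exp (Y ω)) μ := by simpa using hint 1
  have hint_neg : Integrable (fun ω => exp (-Y ω)) μ := by simpa using hint (-1)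
  calc ∫⁻ ω, ENNReal.ofReal (Y ω ^ 8) ∂μ
      ≤ ∫⁻ ω, ENNReal.ofReal (8 ! * (exp (Y ω) + exp (-Y ω))) ∂μ :=
        lintegral_mono fun ω => ENNReal.ofReal_le_ofReal (pow_eight_le_exp_add_exp _)
    _ = ENNReal.ofReal (8 ! * (mgf Y μ 1 + mgf Y μ (-1))) := by
        have hint_sum : Integrable (fun ω => (8 ! : ℝ) * (exp (Y ω) + exp (-Y ω))) μ :=
          (hint_pos.add hint_neg).const_mul _
        rw [← ofReal_integral_eq_lintegral_ofReal hint_sum (ae_of_all _ fun ω => by positivity),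
          integral_const_mul, integral_add hint_pos hint_neg]
        simp [mgf]
    _ = ENNReal.ofReal (2 * 8 ! * exp (v / 2)) := by
        rw [hmgf, hmgf]
        ring_nf

lemma mgf_sum_mul_eval_pi_gaussianReal {ι κ : Type*} [Fintype ι] {w : ι → ℝ≥0} {e : κ → ι}
    (he : e.Injective) (a : κ → ℝ) (s : Finset κ) (t : ℝ) :
    mgf (fun v => ∑ j ∈ s, a j * v (e j)) (Measure.pi fun q => gaussianReal 0 (w q)) t
      = exp ((∑ j ∈ s, a j ^ 2 * w (e j)) * t ^ 2 / 2) :=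
  ((iIndepFun_pi (X := fun _ => id) fun _ => aemeasurable_id).precomp he
    ).mgf_sum_mul_of_map_eq_gaussianReal (fun j => measurable_pi_apply (e j))
    (fun j => (measurePreserving_eval _ (e j)).map_eq) a s t

lemma lintegral_pow_eight_sum_eval_pi_gaussianReal_le {ι κ : Type*} [Fintype ι] [Fintype κ]
    {w : ι → ℝ≥0} {e : κ → ι} (he : e.Injective) (ξ : κ → ℝ) {S : ℝ}
    (hS : ∑ j, ξ j ^ 2 * w (e j) ≤ S) :
    ∫⁻ v, ENNReal.ofReal ((∑ j, v (e j) * ξ j) ^ 8) ∂Measure.pi (fun q => gaussianReal 0 (w q))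
      ≤ ENNReal.ofReal (2 * 8 ! * exp (S / 2)) := by
  simp_rw [mul_comm _ (ξ _)]
  refine (lintegral_pow_eight_le_of_mgf_eq (v := ∑ j, ξ j ^ 2 * w (e j)) fun t =>
    mgf_sum_mul_eval_pi_gaussianReal he ξ univ t).trans ?_
  gcongr

lemma lintegral_sum_mul_mul_pow_four_le {α ι : Type*} [MeasurableSpace α] {ν : Measure α}
    (s : Finset ι) (t : ι → ℝ) {P Q : ι → α → ℝ} (hP : ∀ i, Measurable (P i))
    (hQ : ∀ i, Measurable (Q i)) {C : ℝ≥0∞} (hPC : ∀ i, ∫⁻ a, ENNReal.ofReal (P i a ^ 8) ∂ν ≤ C)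
    (hQC : ∀ i, ∫⁻ a, ENNReal.ofReal (Q i a ^ 8) ∂ν ≤ C) :
    ∫⁻ a, ENNReal.ofReal ((∑ i ∈ s, t i * (P i a * Q i a)) ^ 4) ∂ν
      ≤ ENNReal.ofReal (#s ^ 3 * ∑ i ∈ s, t i ^ 4) * (2 * C) := by
  calc ∫⁻ a, ENNReal.ofReal ((∑ i ∈ s, t i * (P i a * Q i a)) ^ 4) ∂ν
      ≤ ∫⁻ a, ∑ i ∈ s, ENNReal.ofReal (#s ^ 3 * t i ^ 4)
          * (ENNReal.ofReal (P i a ^ 8) + ENNReal.ofReal (Q i a ^ 8)) ∂ν := by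
        refine lintegral_mono fun a => (ENNReal.ofReal_le_ofReal
          (sum_mul_mul_pow_four_le s t (P · a) (Q · a))).trans_eq ?_
        rw [mul_sum, ENNReal.ofReal_sum_of_nonneg fun i _ => by positivity]
        refine sum_congr rfl fun i _ => ?_
        rw [← mul_assoc, ENNReal.ofReal_mul (by positivity),
          ENNReal.ofReal_add (by positivity) (by positivity)]
    _ = ∑ i ∈ s, ENNReal.ofReal (#s ^ 3 * t i ^ 4)
          * (∫⁻ a, ENNReal.ofReal (P i a ^ 8) ∂ν + ∫⁻ a, ENNReal.ofReal (Q i a ^ 8) ∂ν) := by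
        rw [lintegral_finsetSum _ fun i _ => by fun_prop]
        refine sum_congr rfl fun i _ => ?_
        rw [lintegral_const_mul _ (by fun_prop), lintegral_add_left (by fun_prop)]
    _ ≤ ∑ i ∈ s, ENNReal.ofReal (#s ^ 3 * t i ^ 4) * (C + C) := by
        gcongr with i
        exacts [hPC i, hQC i]
    _ = ENNReal.ofReal (#s ^ 3 * ∑ i ∈ s, t i ^ 4) * (2 * C) := by
        rw [← sum_mul, ← ENNReal.ofReal_sum_of_nonneg fun i _ => by positivity, ← mul_sum,
          two_mul]

lemma lintegral_comp_le_of_indepFun {Ω α β : Type*} [MeasurableSpace Ω] [MeasurableSpace α]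
    [MeasurableSpace β] {μ : Measure Ω} [IsProbabilityMeasure μ] {Φ : Ω → α} {Ψ : Ω → β}
    (hΦ : Measurable Φ) (hΨ : Measurable Ψ) (hind : IndepFun Φ Ψ μ) {F : α × β → ℝ≥0∞}
    (hF : Measurable F) {C : ℝ≥0∞} (hC : ∀ᵐ ω ∂μ, ∫⁻ v, F (v, Ψ ω) ∂μ.map Φ ≤ C) :
    ∫⁻ ω, F (Φ ω, Ψ ω) ∂μ ≤ C :=
  calc ∫⁻ ω, F (Φ ω, Ψ ω) ∂μ = ∫⁻ p, F p ∂μ.map fun ω => (Φ ω, Ψ ω) :=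
        (lintegral_map hF (hΦ.prodMk hΨ)).symm
    _ = ∫⁻ p, F p ∂(μ.map Φ).prod (μ.map Ψ) := by
        rw [(indepFun_iff_map_prod_eq_prod_map_map hΦ.aemeasurable hΨ.aemeasurable).1 hind]
    _ = ∫⁻ ξ, ∫⁻ v, F (v, ξ) ∂μ.map Φ ∂μ.map Ψ := lintegral_prod_symm _ hF.aemeasurable
    _ = ∫⁻ ω, ∫⁻ v, F (v, Ψ ω) ∂μ.map Φ ∂μ := lintegral_map hF.lintegral_prod_left' hΨ
    _ ≤ ∫⁻ _, C ∂μ := lintegral_mono_ae hC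
    _ = C := by simp

/-- `X_α`, with the weights stacked as `v (l, α, γ) = V^l_{αγ}` and the inputs as
`ξ (k, γ) = x^k_γ`. -/
def rowProductSum {r L n : ℕ} (t : Fin r → ℝ) (lab : Fin r × Fin 2 → Fin L) (α : Fin n)
    (p : (Fin L × Fin n × Fin n → ℝ) × ((Fin r × Fin 2) × Fin n → ℝ)) : ℝ :=
  ∑ i, t i * ((∑ γ, p.1 (lab (i, 0), α, γ) * p.2 ((i, 0), γ))
    * ∑ γ, p.1 (lab (i, 1), α, γ) * p.2 ((i, 1), γ))

@[fun_prop]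
lemma measurable_rowProductSum {r L n : ℕ} (t : Fin r → ℝ) (lab : Fin r × Fin 2 → Fin L)
    (α : Fin n) : Measurable (rowProductSum t lab α) := by
  unfold rowProductSum
  fun_prop

lemma lintegral_rowProductSum_pow_four_le {r L n : ℕ} (t : Fin r → ℝ) (sig : Fin L → ℝ)
    (lab : Fin r × Fin 2 → Fin L) {B : ℝ} {ξ : (Fin r × Fin 2) × Fin n → ℝ}
    (hξ : ∀ q, |ξ q| ≤ B) (α : Fin n) :
    ∫⁻ v, ENNReal.ofReal (rowProductSum t lab α (v, ξ) ^ 4)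
        ∂Measure.pi (fun q : Fin L × Fin n × Fin n => gaussianReal 0 ((sig q.1 ^ 2 / n).toNNReal))
      ≤ ENNReal.ofReal
          (r ^ 3 * (∑ i, t i ^ 4) * (2 * (2 * 8 ! * exp (B ^ 2 * (∑ l, sig l ^ 2) / 2)))) := by
  set ν := Measure.pi fun q : Fin L × Fin n × Fin n => gaussianReal 0 ((sig q.1 ^ 2 / n).toNNReal)
  set C := 2 * 8 ! * exp (B ^ 2 * (∑ l, sig l ^ 2) / 2)
  have hvar (k : Fin r × Fin 2) :
      ∑ γ, ξ (k, γ) ^ 2 * ((sig (lab k) ^ 2 / n).toNNReal : ℝ) ≤ B ^ 2 * ∑ l, sig l ^ 2 :=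
    calc ∑ γ, ξ (k, γ) ^ 2 * ((sig (lab k) ^ 2 / n).toNNReal : ℝ)
        ≤ ∑ _γ : Fin n, B ^ 2 * (sig (lab k) ^ 2 / n) := by
          refine sum_le_sum fun γ _ => ?_
          rw [Real.coe_toNNReal _ (by positivity)]
          exact mul_le_mul_of_nonneg_right (sq_le_sq' (neg_le_of_abs_le (hξ _))
            (le_of_abs_le (hξ _))) (by positivity)
      _ = B ^ 2 * sig (lab k) ^ 2 * (n / n) := by
          rw [sum_const, card_univ, Fintype.card_fin, nsmul_eq_mul]
          ring
      _ ≤ B ^ 2 * sig (lab k) ^ 2 := mul_le_of_le_one_right (by positivity) (div_self_le_one _)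
      _ ≤ B ^ 2 * ∑ l, sig l ^ 2 := by
          gcongr
          exact single_le_sum (fun l _ => sq_nonneg (sig l)) (mem_univ _)
  have hrow (k : Fin r × Fin 2) :
      ∫⁻ v, ENNReal.ofReal ((∑ γ, v (lab k, α, γ) * ξ (k, γ)) ^ 8) ∂ν ≤ ENNReal.ofReal C :=
    lintegral_pow_eight_sum_eval_pi_gaussianReal_le (e := fun γ => (lab k, α, γ))
      (fun γ γ' h => by simpa using h) (fun γ => ξ (k, γ)) (hvar k)
  have hmeas (k : Fin r × Fin 2) : Measurable fun v : Fin L × Fin n × Fin n → ℝ =>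
      ∑ γ, v (lab k, α, γ) * ξ (k, γ) := by fun_prop
  have key := lintegral_sum_mul_mul_pow_four_le (ν := ν) (C := ENNReal.ofReal C) univ t
    (P := fun i v => ∑ γ, v (lab (i, 0), α, γ) * ξ ((i, 0), γ))
    (Q := fun i v => ∑ γ, v (lab (i, 1), α, γ) * ξ ((i, 1), γ))
    (fun i => hmeas (i, 0)) (fun i => hmeas (i, 1)) (fun i => hrow (i, 0)) (fun i => hrow (i, 1))
  rwa [card_univ, Fintype.card_fin, ← ENNReal.ofReal_ofNat 2, ← ENNReal.ofReal_mul zero_le_two,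
    ← ENNReal.ofReal_mul (by positivity)] at key

theorem statement9_general
    (r L : ℕ) (t : Fin r → ℝ) (sig : Fin L → ℝ) (B : ℝ) (lab : Fin r × Fin 2 → Fin L)
    (Ω : Type) [MeasurableSpace Ω] (μ : Measure Ω) [IsProbabilityMeasure μ]
    (V : ℕ → Fin L → Ω → ℕ → ℕ → ℝ)
    (x : ℕ → Fin r × Fin 2 → ℕ → Ω → ℝ)
    (hVmeas : ∀ n l a b, Measurable (fun ω => V n l ω a b))
    (hxmeas : ∀ n k γ, Measurable (x n k γ))
    (hVlaw : ∀ n : ℕ, 1 ≤ n →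
      Measure.map (fun ω => fun q : Fin L × Fin n × Fin n => V n q.1 ω q.2.1 q.2.2) μ
        = Measure.pi
            (fun q : Fin L × Fin n × Fin n => gaussianReal 0 ((sig q.1 ^ 2 / n).toNNReal)))
    (hindep : ∀ n : ℕ, IndepFun
      (fun ω => fun q : Fin L × Fin n × Fin n => V n q.1 ω q.2.1 q.2.2)
      (fun ω => fun q : (Fin r × Fin 2) × Fin n => x n q.1 q.2 ω) μ)
    (hxbound : ∀ n : ℕ, ∀ᵐ ω ∂μ, ∀ k : Fin r × Fin 2, ∀ γ < n, |x n k γ ω| ≤ B)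
    (X : ℕ → ℕ → Ω → ℝ)
    (hX : ∀ n α ω, X n α ω = ∑ i : Fin r, t i *
      ∑ γ1 ∈ Finset.range n, ∑ γ2 ∈ Finset.range n,
        V n (lab (i, 0)) ω α γ1 * V n (lab (i, 1)) ω α γ2 *
          x n (i, 0) γ1 ω * x n (i, 1) γ2 ω)
:
    ∃ M : ℝ, ∀ n : ℕ, 1 ≤ n → ∫ ω, (X n 0 ω) ^ 4 ∂μ ≤ M := by
  refine ⟨r ^ 3 * (∑ i, t i ^ 4) * (2 * (2 * 8 ! * exp (B ^ 2 * (∑ l, sig l ^ 2) / 2))),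
    fun n hn => ?_⟩
  set ΦV := fun ω => fun q : Fin L × Fin n × Fin n => V n q.1 ω q.2.1 q.2.2
  set Φx := fun ω => fun q : (Fin r × Fin 2) × Fin n => x n q.1 q.2 ω
  have hXrow ω : X n 0 ω = rowProductSum t lab ⟨0, hn⟩ (ΦV ω, Φx ω) := by
    simp only [hX, rowProductSum, sum_mul_sum, Finset.sum_range, ΦV, Φx]
    ac_rfl
  have hbound : ∫⁻ ω, ENNReal.ofReal (X n 0 ω ^ 4) ∂μ ≤ ENNReal.ofReal
      (r ^ 3 * (∑ i, t i ^ 4) * (2 * (2 * 8 ! * exp (B ^ 2 * (∑ l, sig l ^ 2) / 2)))) := by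
    simp_rw [hXrow]
    refine lintegral_comp_le_of_indepFun (by fun_prop) (by fun_prop) (hindep n)
      (F := fun p => ENNReal.ofReal (rowProductSum t lab ⟨0, hn⟩ p ^ 4)) (by fun_prop) ?_
    filter_upwards [hxbound n] with ω hω
    rw [hVlaw n hn]
    exact lintegral_rowProductSum_pow_four_le t sig lab (fun q => hω q.1 q.2 q.2.isLt) _
  rw [integral_eq_lintegral_of_nonneg_ae (ae_of_all _ fun ω => by positivity)
    (by simp_rw [hXrow]; exact Measurable.aestronglyMeasurable (by fun_prop))]
  exact ENNReal.toReal_le_of_le_ofReal (by positivity) hbound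

/-- In Setup (DP), the fourth moment of `X_1` (index `0` here) is bounded uniformly in the width `n`. -/
theorem statement9
    (r L : ℕ) (hr : 1 ≤ r) (hL : 1 ≤ L)
    (t : Fin r → ℝ) (sig : Fin L → ℝ) (hsig : ∀ l, 0 < sig l)
    (B : ℝ) (hB : 0 < B)
    (lab : Fin r × Fin 2 → Fin L) (hlab : ∀ i : Fin r, lab (i, 0) ≠ lab (i, 1))
    (Ω : Type) [MeasurableSpace Ω] (μ : Measure Ω) [IsProbabilityMeasure μ]
    (V : ℕ → Fin L → Ω → ℕ → ℕ → ℝ)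
    (x : ℕ → Fin r × Fin 2 → ℕ → Ω → ℝ)
    (hVmeas : ∀ n l a b, Measurable (fun ω => V n l ω a b))
    (hxmeas : ∀ n k γ, Measurable (x n k γ))
    (hVlaw : ∀ n : ℕ, 1 ≤ n →
      Measure.map (fun ω => fun q : Fin L × Fin n × Fin n => V n q.1 ω q.2.1 q.2.2) μ
        = Measure.pi
            (fun q : Fin L × Fin n × Fin n => gaussianReal 0 ((sig q.1 ^ 2 / n).toNNReal)))
    (hindep : ∀ n : ℕ, IndepFun
      (fun ω => fun q : Fin L × Fin n × Fin n => V n q.1 ω q.2.1 q.2.2)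
      (fun ω => fun q : (Fin r × Fin 2) × Fin n => x n q.1 q.2 ω) μ)
    (hxbound : ∀ n : ℕ, ∀ᵐ ω ∂μ, ∀ k : Fin r × Fin 2, ∀ γ < n, |x n k γ ω| ≤ B)
    (c : Fin r × Fin 2 → Fin r × Fin 2 → ℝ)
    (hc : ∀ k k' : Fin r × Fin 2, ∀ᵐ ω ∂μ, Tendsto
      (fun n : ℕ => (∑ γ ∈ Finset.range n, x n k γ ω * x n k' γ ω) / (n : ℝ))
      atTop (𝓝 (c k k')))
    (X : ℕ → ℕ → Ω → ℝ)
    (hX : ∀ n α ω, X n α ω = ∑ i : Fin r, t i *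
      ∑ γ1 ∈ Finset.range n, ∑ γ2 ∈ Finset.range n,
        V n (lab (i, 0)) ω α γ1 * V n (lab (i, 1)) ω α γ2 *
          x n (i, 0) γ1 ω * x n (i, 1) γ2 ω)
:
    ∃ M : ℝ, ∀ n : ℕ, 1 ≤ n → ∫ ω, (X n 0 ω) ^ 4 ∂μ ≤ M :=
  statement9_general r L t sig B lab Ω μ V x hVmeas hxmeas hVlaw hindep hxbound X hX
end
end

section
/- In Setup (DP), the third absolute moment of X_1 is negligible compared to √n: n^{-1/2} · E[|X_1|³] → 0 as the width n tends to infinity. -/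
/-!
Write `X_1 = ∑ᵢ tᵢ Sᵢ₁ Sᵢ₂` with `Sᵢⱼ = ∑_γ W^{i,j}_{1γ} x^{i,j}_γ`. Conditionally on the
inputs, `Sᵢⱼ` is a centred Gaussian of variance `(σ²/n) ∑_γ (x_γ)² ≤ σ² B²`, so
`E[exp (± Sᵢⱼ)] ≤ exp (σ² B² / 2)`, and `s⁶ ≤ 720 (eˢ + e⁻ˢ)` turns this into a bound on `E[Sᵢⱼ⁶]`
that does not depend on `n`. Jensen and AM–GM give `|X_1|³ ≤ r² ∑ᵢ |tᵢ|³ (Sᵢ₁⁶ + Sᵢ₂⁶) / 2`, so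
`E|X_1|³` stays bounded and `E|X_1|³ / √n → 0`.
-/

open MeasureTheory ProbabilityTheory Filter Topology Real

open scoped ENNReal NNReal

theorem lintegral_exp_mul_gaussianReal (v : ℝ≥0) (a : ℝ) :
    ∫⁻ z, ENNReal.ofReal (rexp (a * z)) ∂gaussianReal 0 v
      = ENNReal.ofReal (rexp (v * a ^ 2 / 2)) := by
  rw [← ofReal_integral_eq_lintegral_ofReal (integrable_exp_mul_gaussianReal a)
    (ae_of_all _ fun z => (exp_pos _).le)]
  congr 1
  simpa [mgf] using congrFun (mgf_id_gaussianReal (μ := 0) (v := v)) a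

theorem lintegral_exp_sum_mul_pi_gaussianReal {ι : Type*} [Fintype ι] (v : ι → ℝ≥0) (c : ι → ℝ) :
    ∫⁻ u, ENNReal.ofReal (rexp (∑ q, c q * u q)) ∂Measure.pi (fun q => gaussianReal 0 (v q))
      = ENNReal.ofReal (rexp (∑ q, (v q : ℝ) * c q ^ 2 / 2)) := by
  have hmeas : ∀ q, Measurable fun z : ℝ => ENNReal.ofReal (rexp (c q * z)) := by fun_prop
  simp only [exp_sum, ENNReal.ofReal_prod_of_nonneg fun q _ => (exp_pos _).le]
  rw [lintegral_prod_eq_prod_lintegral_of_indepFun _ _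
    (iIndepFun_pi fun q => (hmeas q).aemeasurable) fun q => (hmeas q).comp (measurable_pi_apply q)]
  refine Finset.prod_congr rfl fun q _ => ?_
  exact ((measurePreserving_eval (fun q => gaussianReal 0 (v q)) q).lintegral_comp
    (hmeas q)).trans (lintegral_exp_mul_gaussianReal _ _)

theorem lintegral_exp_sum_mul_of_indepFun {Ω ι : Type*} [MeasurableSpace Ω] {μ : Measure Ω}
    [IsFiniteMeasure μ] [Fintype ι] {v : ι → ℝ≥0} {C F : Ω → ι → ℝ}
    (hC : Measurable C) (hF : Measurable F) (hCF : IndepFun C F μ)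
    (hlaw : μ.map F = Measure.pi fun q => gaussianReal 0 (v q)) :
    ∫⁻ ω, ENNReal.ofReal (rexp (∑ q, C ω q * F ω q)) ∂μ
      = ∫⁻ ω, ENNReal.ofReal (rexp (∑ q, (v q : ℝ) * C ω q ^ 2 / 2)) ∂μ := by
  let φ : (ι → ℝ) × (ι → ℝ) → ℝ≥0∞ := fun p => ENNReal.ofReal (rexp (∑ q, p.1 q * p.2 q))
  have hφ : Measurable φ := by fun_prop
  -- Independence makes the joint law a product, so the Gaussian vector is integrated out first.
  have hprod := (indepFun_iff_map_prod_eq_prod_map_map hC.aemeasurable hF.aemeasurable).mp hCF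
  calc ∫⁻ ω, φ (C ω, F ω) ∂μ
      = ∫⁻ c, ∫⁻ u, φ (c, u) ∂(μ.map F) ∂(μ.map C) := by
        rw [← lintegral_map hφ (hC.prodMk hF), hprod, hlaw, lintegral_prod _ hφ.aemeasurable]
    _ = ∫⁻ c, ENNReal.ofReal (rexp (∑ q, (v q : ℝ) * c q ^ 2 / 2)) ∂(μ.map C) := by
        simp only [hlaw, φ, lintegral_exp_sum_mul_pi_gaussianReal]
    _ = _ := lintegral_map (by fun_prop) hC

theorem pow_six_le_exp_add_exp_neg (s : ℝ) : s ^ 6 ≤ 720 * (rexp s + rexp (-s)) := by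
  have h := pow_div_factorial_le_exp _ (abs_nonneg s) 6
  rw [(by decide : Nat.factorial 6 = 720), Even.pow_abs ⟨3, rfl⟩] at h
  push_cast at h
  linarith [exp_abs_le s]

theorem lintegral_sum_mul_pow_six_le_of_indepFun {Ω ι : Type*} [MeasurableSpace Ω]
    {μ : Measure Ω} [IsProbabilityMeasure μ] [Fintype ι] {v : ι → ℝ≥0} {C F : Ω → ι → ℝ}
    (hC : Measurable C) (hF : Measurable F) (hCF : IndepFun C F μ)
    (hlaw : μ.map F = Measure.pi fun q => gaussianReal 0 (v q))
    {s : ℝ} (hvar : ∀ᵐ ω ∂μ, ∑ q, (v q : ℝ) * C ω q ^ 2 ≤ s) :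
    ∫⁻ ω, ENNReal.ofReal ((∑ q, C ω q * F ω q) ^ 6) ∂μ
      ≤ ENNReal.ofReal (1440 * rexp (s / 2)) := by
  set S : Ω → ℝ := fun ω => ∑ q, C ω q * F ω q
  set M := ∫⁻ ω, ENNReal.ofReal (rexp (∑ q, (v q : ℝ) * C ω q ^ 2 / 2)) ∂μ
  have hmgf_pos : ∫⁻ ω, ENNReal.ofReal (rexp (S ω)) ∂μ = M :=
    lintegral_exp_sum_mul_of_indepFun hC hF hCF hlaw
  have hmgf_neg : ∫⁻ ω, ENNReal.ofReal (rexp (-S ω)) ∂μ = M := by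
    simpa [S, ← Finset.sum_neg_distrib] using
      lintegral_exp_sum_mul_of_indepFun hC.neg hF (hCF.comp measurable_neg measurable_id) hlaw
  have hM : M ≤ ENNReal.ofReal (rexp (s / 2)) := by
    refine lintegral_le_const ?_
    filter_upwards [hvar] with ω hω
    gcongr
    rw [← Finset.sum_div]
    linarith
  calc ∫⁻ ω, ENNReal.ofReal (S ω ^ 6) ∂μ
      ≤ ∫⁻ ω, ENNReal.ofReal 720
          * (ENNReal.ofReal (rexp (S ω)) + ENNReal.ofReal (rexp (-S ω))) ∂μ := by
        refine lintegral_mono fun ω => ?_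
        rw [← ENNReal.ofReal_add (exp_pos _).le (exp_pos _).le,
          ← ENNReal.ofReal_mul (by norm_num)]
        exact ENNReal.ofReal_le_ofReal (pow_six_le_exp_add_exp_neg _)
    _ = ENNReal.ofReal 720 * (M + M) := by
        rw [lintegral_const_mul _ (by fun_prop), lintegral_add_left (by fun_prop), hmgf_pos,
          hmgf_neg]
    _ ≤ ENNReal.ofReal 720 * (ENNReal.ofReal (rexp (s / 2)) + ENNReal.ofReal (rexp (s / 2))) := by
        gcongr
    _ = ENNReal.ofReal (1440 * rexp (s / 2)) := by
        rw [← ENNReal.ofReal_add (exp_pos _).le (exp_pos _).le, ← ENNReal.ofReal_mul (by norm_num)]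
        ring_nf

theorem sum_ite_fst_eq_and_snd_fst_eq {A B C M : Type*} [Fintype A] [Fintype B] [Fintype C]
    [DecidableEq A] [DecidableEq B] [AddCommMonoid M] (g : A × B × C → M) (a : A) (b : B) :
    ∑ q, (if q.1 = a ∧ q.2.1 = b then g q else 0) = ∑ γ, g (a, b, γ) := by
  simp only [Fintype.sum_prod_type, ite_and]
  rw [Finset.sum_eq_single a (fun x _ hx => by simp [hx]) (by simp),
    Finset.sum_eq_single b (fun x _ hx => by simp [hx]) (by simp)]
  simp

theorem lintegral_sum_range_mul_pow_six_le {κ Ω : Type*} [MeasurableSpace Ω] {μ : Measure Ω}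
    [IsProbabilityMeasure μ] {L n : ℕ} (sig : Fin L → ℝ) {B : ℝ}
    (V : Fin L → Ω → ℕ → ℕ → ℝ) (x : κ → ℕ → Ω → ℝ)
    (hVmeas : ∀ l a b, Measurable (fun ω => V l ω a b)) (hxmeas : ∀ k γ, Measurable (x k γ))
    (hVlaw : Measure.map (fun ω => fun q : Fin L × Fin n × Fin n => V q.1 ω q.2.1 q.2.2) μ
        = Measure.pi
            (fun q : Fin L × Fin n × Fin n => gaussianReal 0 ((sig q.1 ^ 2 / n).toNNReal)))
    (hindep : IndepFun
      (fun ω => fun q : Fin L × Fin n × Fin n => V q.1 ω q.2.1 q.2.2)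
      (fun ω => fun q : κ × Fin n => x q.1 q.2 ω) μ)
    (l : Fin L) (k : κ) (hxbound : ∀ᵐ ω ∂μ, ∀ γ < n, |x k γ ω| ≤ B) {α : ℕ} (hα : α < n) :
    ∫⁻ ω, ENNReal.ofReal ((∑ γ ∈ Finset.range n, V l ω α γ * x k γ ω) ^ 6) ∂μ
      ≤ ENNReal.ofReal (1440 * rexp (sig l ^ 2 * B ^ 2 / 2)) := by
  classical
  set F := fun ω => fun q : Fin L × Fin n × Fin n => V q.1 ω q.2.1 q.2.2
  set G := fun ω => fun q : κ × Fin n => x q.1 q.2 ω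
  -- The row sum is a linear form in the Gaussian entries whose coefficients `c (G ω)` are
  -- functions of the inputs alone, hence independent of the entries.
  let c : (κ × Fin n → ℝ) → Fin L × Fin n × Fin n → ℝ :=
    fun y q => if q.1 = l ∧ q.2.1 = ⟨α, hα⟩ then y (k, q.2.2) else 0
  have hc : Measurable c := measurable_pi_lambda _ fun q => by
    simp only [c]
    split_ifs <;> fun_prop
  have hsum : ∀ ω, ∑ γ ∈ Finset.range n, V l ω α γ * x k γ ω = ∑ q, c (G ω) q * F ω q := by
    intro ω
    simp only [c, ite_mul, zero_mul, sum_ite_fst_eq_and_snd_fst_eq, Finset.sum_range]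
    exact Finset.sum_congr rfl fun γ _ => mul_comm _ _
  have hvar : ∀ᵐ ω ∂μ,
      ∑ q, ((sig q.1 ^ 2 / n).toNNReal : ℝ) * c (G ω) q ^ 2 ≤ sig l ^ 2 * B ^ 2 := by
    filter_upwards [hxbound] with ω hω
    have hn : (0 : ℝ) < n := by exact_mod_cast hα.trans_le' (Nat.zero_le α)
    simp only [c, ite_pow, ne_eq, OfNat.ofNat_ne_zero, not_false_eq_true, zero_pow, mul_ite,
      mul_zero, sum_ite_fst_eq_and_snd_fst_eq,
      Real.coe_toNNReal _ (by positivity : 0 ≤ sig l ^ 2 / n)]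
    calc ∑ γ : Fin n, sig l ^ 2 / n * x k γ ω ^ 2
        ≤ ∑ γ : Fin n, sig l ^ 2 / n * B ^ 2 := by
          refine Finset.sum_le_sum fun γ _ => mul_le_mul_of_nonneg_left ?_ (by positivity)
          exact sq_le_sq' (abs_le.mp (hω γ γ.isLt)).1 (abs_le.mp (hω γ γ.isLt)).2
      _ = sig l ^ 2 * B ^ 2 := by
          simp only [Finset.sum_const, Finset.card_univ, Fintype.card_fin, nsmul_eq_mul]
          field_simp
  simp only [hsum]
  exact lintegral_sum_mul_pow_six_le_of_indepFun (hc.comp (by fun_prop)) (by fun_prop)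
    (hindep.symm.comp hc measurable_id) hVlaw hvar

theorem abs_sum_mul_mul_pow_three_le {ι : Type*} (s : Finset ι) (t a b : ι → ℝ) :
    |∑ i ∈ s, t i * (a i * b i)| ^ 3
      ≤ ∑ i ∈ s, (s.card : ℝ) ^ 2 * |t i| ^ 3 / 2 * (a i ^ 6 + b i ^ 6) := by
  have hamgm : ∀ i, (|t i| * |a i| * |b i|) ^ 3 ≤ |t i| ^ 3 / 2 * (a i ^ 6 + b i ^ 6) := by
    intro i
    have h := two_mul_le_add_sq (|a i| ^ 3) (|b i| ^ 3)
    rw [← pow_mul, ← pow_mul, Even.pow_abs ⟨3, rfl⟩, Even.pow_abs ⟨3, rfl⟩] at h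
    calc (|t i| * |a i| * |b i|) ^ 3 = |t i| ^ 3 / 2 * (2 * |a i| ^ 3 * |b i| ^ 3) := by ring
      _ ≤ |t i| ^ 3 / 2 * (a i ^ 6 + b i ^ 6) := by gcongr
  calc |∑ i ∈ s, t i * (a i * b i)| ^ 3
      ≤ (∑ i ∈ s, |t i| * |a i| * |b i|) ^ 3 := by
        gcongr
        refine (Finset.abs_sum_le_sum_abs _ _).trans_eq ?_
        simp only [abs_mul, mul_assoc]
    _ ≤ (s.card : ℝ) ^ 2 * ∑ i ∈ s, (|t i| * |a i| * |b i|) ^ 3 :=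
        pow_sum_le_card_mul_sum_pow (fun i _ => by positivity) 2
    _ ≤ (s.card : ℝ) ^ 2 * ∑ i ∈ s, |t i| ^ 3 / 2 * (a i ^ 6 + b i ^ 6) := by
        gcongr with i
        exact hamgm i
    _ = _ := by
        rw [Finset.mul_sum]
        exact Finset.sum_congr rfl fun i _ => by ring

theorem lintegral_abs_sum_mul_mul_pow_three_le {Ω ι : Type*} [MeasurableSpace Ω] {μ : Measure Ω}
    (s : Finset ι) (t : ι → ℝ) {a b : ι → Ω → ℝ} (ha : ∀ i, Measurable (a i))
    (hb : ∀ i, Measurable (b i)) {Ka Kb : ι → ℝ≥0∞}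
    (hKa : ∀ i, ∫⁻ ω, ENNReal.ofReal (a i ω ^ 6) ∂μ ≤ Ka i)
    (hKb : ∀ i, ∫⁻ ω, ENNReal.ofReal (b i ω ^ 6) ∂μ ≤ Kb i) :
    ∫⁻ ω, ENNReal.ofReal (|∑ i ∈ s, t i * (a i ω * b i ω)| ^ 3) ∂μ
      ≤ ∑ i ∈ s, ENNReal.ofReal ((s.card : ℝ) ^ 2 * |t i| ^ 3 / 2) * (Ka i + Kb i) := by
  calc ∫⁻ ω, ENNReal.ofReal (|∑ i ∈ s, t i * (a i ω * b i ω)| ^ 3) ∂μ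
      ≤ ∫⁻ ω, ∑ i ∈ s, ENNReal.ofReal ((s.card : ℝ) ^ 2 * |t i| ^ 3 / 2)
          * (ENNReal.ofReal (a i ω ^ 6) + ENNReal.ofReal (b i ω ^ 6)) ∂μ := by
        refine lintegral_mono fun ω => (ENNReal.ofReal_le_ofReal
          (abs_sum_mul_mul_pow_three_le s t (a · ω) (b · ω))).trans_eq ?_
        rw [ENNReal.ofReal_sum_of_nonneg fun i _ => by positivity]
        refine Finset.sum_congr rfl fun i _ => ?_
        rw [ENNReal.ofReal_mul (by positivity), ENNReal.ofReal_add (by positivity) (by positivity)]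
    _ = ∑ i ∈ s, ENNReal.ofReal ((s.card : ℝ) ^ 2 * |t i| ^ 3 / 2)
          * (∫⁻ ω, ENNReal.ofReal (a i ω ^ 6) ∂μ + ∫⁻ ω, ENNReal.ofReal (b i ω ^ 6) ∂μ) := by
        rw [lintegral_finsetSum _ fun i _ => by fun_prop]
        refine Finset.sum_congr rfl fun i _ => ?_
        rw [lintegral_const_mul _ (by fun_prop), lintegral_add_left (by fun_prop)]
    _ ≤ _ := by
        gcongr with i
        exacts [hKa i, hKb i]

theorem tendsto_div_sqrt_natCast_of_eventually_le {a : ℕ → ℝ} {C : ℝ} (h0 : ∀ n, 0 ≤ a n)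
    (hC : ∀ᶠ n in atTop, a n ≤ C) : Tendsto (fun n : ℕ => a n / √n) atTop (𝓝 0) := by
  refine squeeze_zero' (Eventually.of_forall fun n => div_nonneg (h0 n) (sqrt_nonneg _)) ?_
    ((tendsto_const_nhds (x := C)).div_atTop (tendsto_sqrt_atTop.comp tendsto_natCast_atTop_atTop))
  filter_upwards [hC] with n hn
  exact div_le_div_of_nonneg_right hn (sqrt_nonneg _)

theorem statement10_general
    (r L : ℕ)
    (t : Fin r → ℝ) (sig : Fin L → ℝ)
    (B : ℝ)
    (lab : Fin r × Fin 2 → Fin L)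
    (Ω : Type) [MeasurableSpace Ω] (μ : Measure Ω) [IsProbabilityMeasure μ]
    (V : ℕ → Fin L → Ω → ℕ → ℕ → ℝ)
    (x : ℕ → Fin r × Fin 2 → ℕ → Ω → ℝ)
    (hVmeas : ∀ n l a b, Measurable (fun ω => V n l ω a b))
    (hxmeas : ∀ n k γ, Measurable (x n k γ))
    (hVlaw : ∀ n : ℕ, 1 ≤ n →
      Measure.map (fun ω => fun q : Fin L × Fin n × Fin n => V n q.1 ω q.2.1 q.2.2) μ
        = Measure.pi
            (fun q : Fin L × Fin n × Fin n => gaussianReal 0 ((sig q.1 ^ 2 / n).toNNReal)))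
    (hindep : ∀ n : ℕ, IndepFun
      (fun ω => fun q : Fin L × Fin n × Fin n => V n q.1 ω q.2.1 q.2.2)
      (fun ω => fun q : (Fin r × Fin 2) × Fin n => x n q.1 q.2 ω) μ)
    (hxbound : ∀ n : ℕ, ∀ᵐ ω ∂μ, ∀ k : Fin r × Fin 2, ∀ γ < n, |x n k γ ω| ≤ B)
    (X : ℕ → ℕ → Ω → ℝ)
    (hX : ∀ n α ω, X n α ω = ∑ i : Fin r, t i *
      ∑ γ1 ∈ Finset.range n, ∑ γ2 ∈ Finset.range n,
        V n (lab (i, 0)) ω α γ1 * V n (lab (i, 1)) ω α γ2 *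
          x n (i, 0) γ1 ω * x n (i, 1) γ2 ω)
:
    Tendsto (fun n : ℕ => (∫ ω, |X n 0 ω| ^ 3 ∂μ) / Real.sqrt n) atTop (𝓝 0) := by
  let S : ℕ → Fin r → Fin 2 → Ω → ℝ := fun n i j ω =>
    ∑ γ ∈ Finset.range n, V n (lab (i, j)) ω 0 γ * x n (i, j) γ ω
  let K : Fin r → Fin 2 → ℝ≥0∞ := fun i j =>
    ENNReal.ofReal (1440 * rexp (sig (lab (i, j)) ^ 2 * B ^ 2 / 2))
  let M : ℝ≥0∞ := ∑ i, ENNReal.ofReal ((r : ℝ) ^ 2 * |t i| ^ 3 / 2) * (K i 0 + K i 1)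
  have hXS : ∀ n, X n 0 = fun ω => ∑ i, t i * (S n i 0 ω * S n i 1 ω) := by
    refine fun n => funext fun ω => (hX n 0 ω).trans (Finset.sum_congr rfl fun i _ => ?_)
    simp only [S, Finset.sum_mul_sum]
    congr 1
    exact Finset.sum_congr rfl fun γ1 _ => Finset.sum_congr rfl fun γ2 _ => by ring
  have hS : ∀ n, 1 ≤ n → ∀ i j, ∫⁻ ω, ENNReal.ofReal (S n i j ω ^ 6) ∂μ ≤ K i j :=
    fun n hn i j => lintegral_sum_range_mul_pow_six_le sig (V n) (x n) (hVmeas n) (hxmeas n)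
      (hVlaw n hn) (hindep n) (lab (i, j)) (i, j) ((hxbound n).mono fun ω hω => hω (i, j)) hn
  have hmoment : ∀ n, 1 ≤ n → ∫⁻ ω, ENNReal.ofReal (|X n 0 ω| ^ 3) ∂μ ≤ M := fun n hn => by
    simpa only [hXS, Finset.card_univ, Fintype.card_fin] using
      lintegral_abs_sum_mul_mul_pow_three_le Finset.univ t (fun i => by fun_prop)
        (fun i => by fun_prop) (hS n hn · 0) (hS n hn · 1)
  have hM : M ≠ ∞ := by simp [M, K, ENNReal.mul_eq_top]
  refine tendsto_div_sqrt_natCast_of_eventually_le (C := M.toReal)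
    (fun n => integral_nonneg fun ω => by positivity) ?_
  filter_upwards [eventually_ge_atTop 1] with n hn
  rw [integral_eq_lintegral_of_nonneg_ae (ae_of_all _ fun ω => by positivity) (by
    rw [hXS]; fun_prop)]
  exact ENNReal.toReal_mono hM (hmoment n hn)

/-- In Setup (DP), the third absolute moment of `X_1` (index `0` here) is `o(√n)` as the width `n` tends to infinity. -/
theorem statement10
    (r L : ℕ) (hr : 1 ≤ r) (hL : 1 ≤ L)
    (t : Fin r → ℝ) (sig : Fin L → ℝ) (hsig : ∀ l, 0 < sig l)
    (B : ℝ) (hB : 0 < B)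
    (lab : Fin r × Fin 2 → Fin L) (hlab : ∀ i : Fin r, lab (i, 0) ≠ lab (i, 1))
    (Ω : Type) [MeasurableSpace Ω] (μ : Measure Ω) [IsProbabilityMeasure μ]
    (V : ℕ → Fin L → Ω → ℕ → ℕ → ℝ)
    (x : ℕ → Fin r × Fin 2 → ℕ → Ω → ℝ)
    (hVmeas : ∀ n l a b, Measurable (fun ω => V n l ω a b))
    (hxmeas : ∀ n k γ, Measurable (x n k γ))
    (hVlaw : ∀ n : ℕ, 1 ≤ n →
      Measure.map (fun ω => fun q : Fin L × Fin n × Fin n => V n q.1 ω q.2.1 q.2.2) μ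
        = Measure.pi
            (fun q : Fin L × Fin n × Fin n => gaussianReal 0 ((sig q.1 ^ 2 / n).toNNReal)))
    (hindep : ∀ n : ℕ, IndepFun
      (fun ω => fun q : Fin L × Fin n × Fin n => V n q.1 ω q.2.1 q.2.2)
      (fun ω => fun q : (Fin r × Fin 2) × Fin n => x n q.1 q.2 ω) μ)
    (hxbound : ∀ n : ℕ, ∀ᵐ ω ∂μ, ∀ k : Fin r × Fin 2, ∀ γ < n, |x n k γ ω| ≤ B)
    (c : Fin r × Fin 2 → Fin r × Fin 2 → ℝ)
    (hc : ∀ k k' : Fin r × Fin 2, ∀ᵐ ω ∂μ, Tendsto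
      (fun n : ℕ => (∑ γ ∈ Finset.range n, x n k γ ω * x n k' γ ω) / (n : ℝ))
      atTop (𝓝 (c k k')))
    (X : ℕ → ℕ → Ω → ℝ)
    (hX : ∀ n α ω, X n α ω = ∑ i : Fin r, t i *
      ∑ γ1 ∈ Finset.range n, ∑ γ2 ∈ Finset.range n,
        V n (lab (i, 0)) ω α γ1 * V n (lab (i, 1)) ω α γ2 *
          x n (i, 0) γ1 ω * x n (i, 1) γ2 ω)
:
    Tendsto (fun n : ℕ => (∫ ω, |X n 0 ω| ^ 3 ∂μ) / Real.sqrt n) atTop (𝓝 0) :=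
  statement10_general r L t sig B lab Ω μ V x hVmeas hxmeas hVlaw hindep hxbound X hX
end
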